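/- Twist-operator orthogonality (finite-volume step of the Yamanaka–Oshikawa–Affleck theorem). Consider the Hubbard model on the periodic chain Λ = {1, …, N} with period P, i.e., t_{x+P,y+P} = t_{x,y} and U_{x+P} = U_x (indices modulo N), and let T_P denote the unitary translation operator implementing c_{x,σ} ↦ c_{x+P,σ}. Let Φ be a normalized state with N̂_e Φ = N_e Φ and N̂_↑ Φ = (N_e/2) Φ, where N̂_↑ = Σ_x n_{x,↑}, and suppose T_P Φ = Φ. Set Ψ = U_tw Φ with the twist operator U_tw = exp[2πi Σ_{x=1}^{N} (x/N) n_{x,↑}], and let ν = N_e/N. Then T_P Ψ = e^{iπPν} Ψ. Consequently, whenever Pν/2 is not an integer, Ψ is orthogonal to Φ. -/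

import Mathlib

/-!  Common framework: the Hubbard model on a finite lattice, formalized
concretely on the fermionic Fock space realized as `Finset (Λ × Bool) → ℂ`. -/

noncomputable section
namespace Hubbard

open scoped BigOperators

variable (Λ : Type*) [Fintype Λ] [LinearOrder Λ]

/-- Spin indices: `true` = ↑, `false` = ↓. -/
abbrev Spin := Bool

/-- The fermionic Fock space over the set of modes `Λ × Spin`,
realized concretely in the occupation-number basis. -/
abbrev FockSpace := Finset (Λ × Spin) → ℂ

variable {Λ}

/-- An auxiliary (lexicographic) strict order on modes, fixing the sign
convention of the fermionic operators. -/
def mlt (j i : Λ × Spin) : Prop := j.1 < i.1 ∨ (j.1 = i.1 ∧ j.2 < i.2)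

instance (i : Λ × Spin) : DecidablePred (fun j => mlt j i) := fun j =>
  inferInstanceAs (Decidable (j.1 < i.1 ∨ (j.1 = i.1 ∧ j.2 < i.2)))

/-- The fermionic sign `(-1)^{#{j ∈ S : j < i}}`. -/
def sgn (i : Λ × Spin) (S : Finset (Λ × Spin)) : ℂ :=
  (-1 : ℂ) ^ (S.filter (fun j => mlt j i)).card

/-- The annihilation operator `c_{x,σ}` for the mode `i = (x,σ)`. -/
def cop (i : Λ × Spin) : Module.End ℂ (FockSpace Λ) where
  toFun ψ := fun S => if i ∈ S then 0 else sgn i S * ψ (insert i S)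
  map_add' ψ φ := by funext S; by_cases h : i ∈ S <;> simp [h, mul_add]
  map_smul' a ψ := by
    funext S; by_cases h : i ∈ S <;> simp [h]
    ring
/-- The creation operator `c†_{x,σ}` for the mode `i = (x,σ)`. -/
def cdag (i : Λ × Spin) : Module.End ℂ (FockSpace Λ) where
  toFun ψ := fun S => if i ∈ S then sgn i (S.erase i) * ψ (S.erase i) else 0
  map_add' ψ φ := by funext S; by_cases h : i ∈ S <;> simp [h, mul_add]
  map_smul' a ψ := by
    funext S; by_cases h : i ∈ S <;> simp [h]
    ring

/-- The number operator `n_{x,σ} = c†_{x,σ} c_{x,σ}`. -/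
def nop (i : Λ × Spin) : Module.End ℂ (FockSpace Λ) := cdag i ∘ₗ cop i

/-- The total electron number operator `N̂_e`. -/
def Nhat : Module.End ℂ (FockSpace Λ) := ∑ i : Λ × Spin, nop i

/-- The number operator of up-spin electrons, `N̂_↑`. -/
def NhatUp : Module.End ℂ (FockSpace Λ) := ∑ x : Λ, nop (x, true)

/-- The hopping Hamiltonian `H_hop = Σ_{x,y,σ} t_{x,y} c†_{x,σ} c_{y,σ}`. -/
def Hhop (t : Λ → Λ → ℝ) : Module.End ℂ (FockSpace Λ) :=
  ∑ x : Λ, ∑ y : Λ, ∑ σ : Spin, (t x y : ℂ) • (cdag (x, σ) ∘ₗ cop (y, σ))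

/-- The interaction Hamiltonian `H_int = Σ_x U_x n_{x,↑} n_{x,↓}`. -/
def Hint (U : Λ → ℝ) : Module.End ℂ (FockSpace Λ) :=
  ∑ x : Λ, (U x : ℂ) • (nop (x, true) ∘ₗ nop (x, false))

/-- The Hubbard Hamiltonian `H = H_hop + H_int`. -/
def Ham (t : Λ → Λ → ℝ) (U : Λ → ℝ) : Module.End ℂ (FockSpace Λ) := Hhop t + Hint U

/-- The Pauli matrices `p^(α)`, `α = 1,2,3` (here indexed by `Fin 3`);
rows/columns indexed by spins (`true` = ↑ first). -/
def pauli (α : Fin 3) (s τ : Spin) : ℂ :=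
  if α = 0 then (if s = τ then 0 else 1)
  else if α = 1 then (if s = τ then 0 else if s then -Complex.I else Complex.I)
  else (if s = τ then (if s then 1 else -1) else 0)

/-- The local spin operator `S^(α)_x = (1/2) Σ_{σ,τ} c†_{x,σ} (p^(α))_{σ,τ} c_{x,τ}`. -/
def spinOp (α : Fin 3) (x : Λ) : Module.End ℂ (FockSpace Λ) :=
  (1 / 2 : ℂ) • ∑ s : Spin, ∑ τ : Spin, pauli α s τ • (cdag (x, s) ∘ₗ cop (x, τ))

/-- The total spin operator `S^(α)_tot`. -/
def Stot (α : Fin 3) : Module.End ℂ (FockSpace Λ) := ∑ x : Λ, spinOp α x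

/-- The squared total spin `(Ŝ_tot)²`. -/
def StotSq : Module.End ℂ (FockSpace Λ) := ∑ α : Fin 3, Stot α ∘ₗ Stot α

/-- The spin-spin coupling `Ŝ_x · Ŝ_y`. -/
def SdotS (x y : Λ) : Module.End ℂ (FockSpace Λ) := ∑ α : Fin 3, spinOp α x ∘ₗ spinOp α y

/-- The inner product on the Fock space. -/
def fdot (ψ φ : FockSpace Λ) : ℂ := ∑ S : Finset (Λ × Spin), (starRingEnd ℂ) (ψ S) * φ S

/-- The vacuum vector `Φ_vac`. -/
def vac : FockSpace Λ := fun S => if S = ∅ then 1 else 0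

/-- The eigenspace of an operator for a real eigenvalue. -/
def eigR (A : Module.End ℂ (FockSpace Λ)) (μ : ℝ) : Submodule ℂ (FockSpace Λ) :=
  Module.End.eigenspace A (μ : ℂ)

/-- The simultaneous eigenspace: energy `E` within the `N_e`-electron sector. -/
def sector (H : Module.End ℂ (FockSpace Λ)) (Ne : ℕ) (E : ℝ) : Submodule ℂ (FockSpace Λ) :=
  eigR H E ⊓ eigR Nhat (Ne : ℝ)

/-- The set of energy eigenvalues in the `N_e`-electron sector. -/
def energies (H : Module.End ℂ (FockSpace Λ)) (Ne : ℕ) : Set ℝ :=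
  {E | sector H Ne E ≠ ⊥}

/-- The ground-state energy in the `N_e`-electron sector. -/
def groundEnergy (H : Module.End ℂ (FockSpace Λ)) (Ne : ℕ) : ℝ := sInf (energies H Ne)

/-- The space of ground states in the `N_e`-electron sector. -/
def groundSpace (H : Module.End ℂ (FockSpace Λ)) (Ne : ℕ) : Submodule ℂ (FockSpace Λ) :=
  sector H Ne (groundEnergy H Ne)

/-- `E_min(S)`: the lowest energy among states with `N̂_e = N_e` and total spin `S`,
i.e. `(Ŝ_tot)² = S(S+1)`. -/
def Emin (H : Module.End ℂ (FockSpace Λ)) (Ne : ℕ) (S : ℝ) : ℝ :=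
  sInf {E : ℝ | eigR H E ⊓ eigR Nhat (Ne : ℝ) ⊓ eigR StotSq (S * (S + 1)) ≠ ⊥}

/-- The orthogonal projection onto the hard-core subspace (no doubly occupied sites). -/
def hcProj : Module.End ℂ (FockSpace Λ) where
  toFun ψ := fun S => if ∃ x : Λ, (x, true) ∈ S ∧ (x, false) ∈ S then 0 else ψ S
  map_add' ψ φ := by
    funext S; by_cases h : ∃ x : Λ, (x, true) ∈ S ∧ (x, false) ∈ S <;> simp [h]
  map_smul' a ψ := by
    funext S; by_cases h : ∃ x : Λ, (x, true) ∈ S ∧ (x, false) ∈ S <;> simp [h]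

/-- The `U = ∞` (hard-core) Hamiltonian `H_∞ = P H_hop P`. -/
def Hinf (t : Λ → Λ → ℝ) : Module.End ℂ (FockSpace Λ) := hcProj ∘ₗ Hhop t ∘ₗ hcProj

/-- Energy-`E` eigenspace inside the `N_e`-electron hard-core subspace. -/
def hcSector (H : Module.End ℂ (FockSpace Λ)) (Ne : ℕ) (E : ℝ) : Submodule ℂ (FockSpace Λ) :=
  eigR H E ⊓ eigR Nhat (Ne : ℝ) ⊓ eigR hcProj 1

/-- Energy eigenvalues in the `N_e`-electron hard-core subspace. -/
def hcEnergies (H : Module.End ℂ (FockSpace Λ)) (Ne : ℕ) : Set ℝ := {E | hcSector H Ne E ≠ ⊥}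

/-- Ground energy in the `N_e`-electron hard-core subspace. -/
def hcGroundEnergy (H : Module.End ℂ (FockSpace Λ)) (Ne : ℕ) : ℝ := sInf (hcEnergies H Ne)

/-- Ground states in the `N_e`-electron hard-core subspace. -/
def hcGroundSpace (H : Module.End ℂ (FockSpace Λ)) (Ne : ℕ) : Submodule ℂ (FockSpace Λ) :=
  hcSector H Ne (hcGroundEnergy H Ne)

/-- The orthogonal projection onto the `N_e`-electron sector. -/
def numProj (Ne : ℕ) : Module.End ℂ (FockSpace Λ) where
  toFun ψ := fun S => if S.card = Ne then ψ S else 0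
  map_add' ψ φ := by funext S; by_cases h : S.card = Ne <;> simp [h]
  map_smul' a ψ := by funext S; by_cases h : S.card = Ne <;> simp [h]

/-- The matrix of an operator in the occupation-number basis. -/
def toMat (A : Module.End ℂ (FockSpace Λ)) :
    Matrix (Finset (Λ × Spin)) (Finset (Λ × Spin)) ℂ :=
  LinearMap.toMatrix (Pi.basisFun ℂ (Finset (Λ × Spin)))
    (Pi.basisFun ℂ (Finset (Λ × Spin))) A

/-- The canonical Gibbs expectation `Tr[A e^{-βH}]/Tr[e^{-βH}]`, the traces being taken
over the `N_e`-electron sector (realized with the projection `numProj Ne`). -/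
def canonExpect (H : Module.End ℂ (FockSpace Λ)) (β : ℝ) (Ne : ℕ)
    (A : Module.End ℂ (FockSpace Λ)) : ℂ :=
  Matrix.trace (toMat (numProj Ne ∘ₗ A ∘ₗ numProj Ne) *
      NormedSpace.exp ((-β : ℂ) • toMat (numProj Ne ∘ₗ H ∘ₗ numProj Ne))) /
    Matrix.trace (toMat (numProj Ne) *
      NormedSpace.exp ((-β : ℂ) • toMat (numProj Ne ∘ₗ H ∘ₗ numProj Ne)))

/-- The pair operator `c†_{x,↑} c†_{x,↓} c_{y,↑} c_{y,↓} + h.c.`. -/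
def pairOp (x y : Λ) : Module.End ℂ (FockSpace Λ) :=
  cdag (x, true) ∘ₗ cdag (x, false) ∘ₗ cop (y, true) ∘ₗ cop (y, false) +
    cdag (y, false) ∘ₗ cdag (y, true) ∘ₗ cop (x, false) ∘ₗ cop (x, true)


/-- The unitary twist operator
`U_tw = exp[2πi Σ_{x=1}^{N} (x/N) n_{x,↑}]` on the chain `{1, …, N}` (realized as
`Fin N`, the site `x` corresponding to the index of value `x − 1`); it is diagonal
in the occupation-number basis. -/
def Utw (N : ℕ) : Module.End ℂ (FockSpace (Fin N)) where
  toFun ψ := fun S =>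
    Complex.exp (2 * Real.pi * Complex.I *
        (∑ m ∈ S.filter (fun m => m.2 = true), ((m.1.val : ℂ) + 1)) / N) * ψ S
  map_add' ψ φ := by funext S; simp [mul_add]
  map_smul' a ψ := by funext S; simp; ring

/-- Translation of the ring `{1, …, N}` by `P` sites. -/
def shiftP (N P : ℕ) (hN : 0 < N) (x : Fin N) : Fin N :=
  ⟨(x.val + P) % N, Nat.mod_lt _ hN⟩

/-! Since `T` fixes the vacuum and intertwines `c†_{x,σ}` with `c†_{x+P,σ}`, it sends each
occupation-basis vector to a multiple of the basis vector of the translated configuration.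
The twist operator is diagonal in that basis, with eigenvalue `∏ ζ^x` over the occupied up-modes,
`ζ = e^{2πi/N}`. Translating all `N_e/2` up-electrons by `P` multiplies this by `ζ^{P N_e/2}`, the
wrap-around modulo `N` being invisible because `ζ^N = 1`; hence `T Ψ = e^{iπPν} Ψ`. Unitarity of
`T` and `T Φ = Φ` then give `⟨Φ, Ψ⟩ = e^{iπPν} ⟨Φ, Ψ⟩`. -/

open Complex Real

section Fock

variable {L : Type*} [LinearOrder L]

lemma sgn_mul_self (i : L × Spin) (S : Finset (L × Spin)) : sgn i S * sgn i S = 1 := by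
  rw [sgn, ← mul_pow]; norm_num

lemma cdag_single {i : L × Spin} {S : Finset (L × Spin)} (hi : i ∉ S) :
    cdag i (Pi.single S 1) = sgn i S • Pi.single (insert i S) 1 := by
  funext R
  by_cases h : R = insert i S
  · subst h; simp [cdag, Finset.erase_insert hi]
  · have hR : i ∈ R → R.erase i ≠ S := fun hiR hR => h (hR ▸ (Finset.insert_erase hiR).symm)
    by_cases hiR : i ∈ R <;> simp [cdag, h, hiR, hR]

lemma nop_apply (i : L × Spin) (ψ : FockSpace L) (S : Finset (L × Spin)) :
    nop i ψ S = if i ∈ S then ψ S else 0 := by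
  by_cases h : i ∈ S
  · simp [nop, cdag, cop, h, ← mul_assoc, sgn_mul_self]
  · simp [nop, cdag, h]

lemma NhatUp_apply [Fintype L] (ψ : FockSpace L) (S : Finset (L × Spin)) :
    NhatUp ψ S = (S.filter (fun m => m.2 = true)).card * ψ S := by
  have hup : S.filter (fun m => m.2 = true) = (Finset.univ.filter fun x => (x, true) ∈ S).map
      (Function.Embedding.sectL L true) := by
    ext ⟨x, s⟩; cases s <;> simp
  simp [NhatUp, nop_apply, hup, Finset.sum_ite]

lemma card_filter_up_of_NhatUp_eq [Fintype L] {Φ : FockSpace L} {n : ℕ}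
    (h : NhatUp Φ = (n : ℂ) • Φ) {S : Finset (L × Spin)} (hS : Φ S ≠ 0) :
    (S.filter (fun m => m.2 = true)).card = n := by
  have hS' := congrFun h S
  rw [NhatUp_apply, Pi.smul_apply, smul_eq_mul] at hS'
  exact_mod_cast mul_right_cancel₀ hS hS'

lemma vac_eq_single : (vac : FockSpace L) = Pi.single ∅ 1 := by
  funext S; simp [vac, Pi.single_apply]

variable {e : Equiv.Perm (L × Spin)} {T : Module.End ℂ (FockSpace L)}

lemma exists_apply_single_map (hvac : T vac = vac) (hcdag : ∀ i, cdag i ∘ₗ T = T ∘ₗ cdag (e i))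
    (S : Finset (L × Spin)) :
    ∃ c : ℂ, T (Pi.single (S.map e.toEmbedding) 1) = c • Pi.single S 1 := by
  induction S using Finset.induction_on with
  | empty => exact ⟨1, by simpa [← vac_eq_single] using hvac⟩
  | @insert i S hiS ih =>
    obtain ⟨c, hc⟩ := ih
    have hei : e i ∉ S.map e.toEmbedding := by simpa using hiS
    refine ⟨sgn (e i) (S.map e.toEmbedding) * c * sgn i S, ?_⟩
    have hsingle : Pi.single ((insert i S).map e.toEmbedding) (1 : ℂ) =
        sgn (e i) (S.map e.toEmbedding) • cdag (e i) (Pi.single (S.map e.toEmbedding) 1) := by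
      rw [cdag_single hei, smul_smul, sgn_mul_self, one_smul, Finset.map_insert]; rfl
    rw [hsingle, map_smul, ← LinearMap.comp_apply T, ← hcdag, LinearMap.comp_apply, hc,
      map_smul, cdag_single hiS, smul_smul, smul_smul, mul_assoc]

theorem exists_apply_eq_mul_map [Fintype L] (hvac : T vac = vac)
    (hcdag : ∀ i, cdag i ∘ₗ T = T ∘ₗ cdag (e i)) :
    ∃ ε : Finset (L × Spin) → ℂ, ∀ ψ R, T ψ R = ε R * ψ (R.map e.toEmbedding) := by
  choose c hc using exists_apply_single_map hvac hcdag
  refine ⟨c, fun ψ R => ?_⟩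
  have hψ : ψ = ∑ S, ψ (e.finsetCongr S) • Pi.single (e.finsetCongr S) (1 : ℂ) := by
    rw [e.finsetCongr.sum_comp (fun S => ψ S • Pi.single S (1 : ℂ))]
    simp [← Pi.single_smul', Finset.univ_sum_single]
  rw [hψ, map_sum]
  simp [hc, Finset.sum_apply, Pi.single_apply, mul_comm]

end Fock

section InnerProduct

variable {L : Type*} [Fintype L]

lemma fdot_smul_right (a : ℂ) (ψ φ : FockSpace L) : fdot ψ (a • φ) = a * fdot ψ φ := by
  simp [fdot, Finset.mul_sum, mul_left_comm]

lemma fdot_eq_zero_of_eigenvalue_ne_one {T : Module.End ℂ (FockSpace L)}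
    (hT : ∀ ψ φ, fdot (T ψ) (T φ) = fdot ψ φ) {ψ φ : FockSpace L} {c : ℂ}
    (hψ : T ψ = ψ) (hφ : T φ = c • φ) (hc : c ≠ 1) : fdot ψ φ = 0 := by
  have h : fdot ψ φ = c * fdot ψ φ := by
    conv_lhs => rw [← hT, hψ, hφ, fdot_smul_right]
  by_contra h0
  exact hc (mul_right_cancel₀ h0 (h.symm.trans (one_mul _).symm))

end InnerProduct

section Chain

variable {N P : ℕ} {hN : 0 < N}

lemma shiftP_injective : Function.Injective (shiftP N P hN) := by
  intro x y hxy
  have h : (x.val + P) % N = (y.val + P) % N := congrArg Fin.val hxy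
  have h' := Nat.ModEq.add_right_cancel' P h
  rw [Nat.ModEq, Nat.mod_eq_of_lt x.isLt, Nat.mod_eq_of_lt y.isLt] at h'
  exact Fin.ext h'

variable (N P hN) in
def shiftModes : Equiv.Perm (Fin N × Spin) :=
  Equiv.prodCongr
    (Equiv.ofBijective _ (Finite.injective_iff_bijective.mp (shiftP_injective (P := P) (hN := hN))))
    (Equiv.refl Spin)

lemma shiftModes_apply (m : Fin N × Spin) : shiftModes N P hN m = (shiftP N P hN m.1, m.2) := rfl

lemma filter_up_map_shiftModes (R : Finset (Fin N × Spin)) :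
    (R.map (shiftModes N P hN).toEmbedding).filter (fun m => m.2 = true) =
      (R.filter (fun m => m.2 = true)).map (shiftModes N P hN).toEmbedding := by
  rw [Finset.filter_map]; rfl

variable (N) in
def twistPhase (S : Finset (Fin N × Spin)) : ℂ :=
  ∏ m ∈ S.filter (fun m => m.2 = true), cexp (2 * π * I / N) ^ (m.1.val + 1)

lemma Utw_apply (ψ : FockSpace (Fin N)) (S : Finset (Fin N × Spin)) :
    Utw N ψ S = twistPhase N S * ψ S := by
  have h : 2 * π * I * (∑ m ∈ S.filter (fun m => m.2 = true), ((m.1.val : ℂ) + 1)) / N =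
      ∑ m ∈ S.filter (fun m => m.2 = true), ((m.1.val + 1 : ℕ) : ℂ) * (2 * π * I / N) := by
    push_cast; rw [← Finset.sum_mul]; ring
  simp only [Utw, LinearMap.coe_mk, AddHom.coe_mk, twistPhase, h, Complex.exp_sum,
    Complex.exp_nat_mul]

lemma twistPhase_map_shiftModes (R : Finset (Fin N × Spin)) :
    twistPhase N (R.map (shiftModes N P hN).toEmbedding) =
      cexp (2 * π * I / N) ^ (P * (R.filter (fun m => m.2 = true)).card) * twistPhase N R := by
  unfold twistPhase
  set ζ := cexp (2 * π * I / N)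
  have hζ : ζ ^ N = 1 := (isPrimitiveRoot_exp N hN.ne').pow_eq_one
  have hstep (x : ℕ) : ζ ^ ((x + P) % N + 1) = ζ ^ P * ζ ^ (x + 1) := by
    rw [pow_succ, ← pow_eq_pow_mod _ hζ]; ring
  simp only [filter_up_map_shiftModes, Finset.prod_map, Equiv.coe_toEmbedding, shiftModes_apply,
    shiftP, hstep]
  rw [Finset.prod_mul_distrib, Finset.prod_const, pow_mul]

theorem apply_Utw_eq_smul_Utw {T : Module.End ℂ (FockSpace (Fin N))}
    {ε : Finset (Fin N × Spin) → ℂ}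
    (hT : ∀ ψ R, T ψ R = ε R * ψ (R.map (shiftModes N P hN).toEmbedding))
    {Φ : FockSpace (Fin N)} {n : ℕ} (hup : NhatUp Φ = (n : ℂ) • Φ) (hTΦ : T Φ = Φ) :
    T (Utw N Φ) = cexp (2 * π * I / N) ^ (P * n) • Utw N Φ := by
  funext R
  have hΦR : Φ R = ε R * Φ (R.map (shiftModes N P hN).toEmbedding) := by rw [← hT, hTΦ]
  rw [hT, Utw_apply, Pi.smul_apply, Utw_apply, hΦR, smul_eq_mul]
  by_cases h0 : Φ (R.map (shiftModes N P hN).toEmbedding) = 0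
  · simp [h0]
  · have hcard := card_filter_up_of_NhatUp_eq hup h0
    rw [filter_up_map_shiftModes, Finset.card_map] at hcard
    rw [twistPhase_map_shiftModes, hcard]
    ring

end Chain

lemma cexp_pi_mul_ne_one {x : ℝ} (hx : ¬∃ k : ℤ, x / 2 = k) : cexp (π * I * x) ≠ 1 := by
  rw [Ne, Complex.exp_eq_one_iff]
  rintro ⟨k, hk⟩
  refine hx ⟨k, ?_⟩
  have : (x : ℂ) = 2 * k := by
    have hπ : (π : ℂ) * I ≠ 0 := mul_ne_zero (by exact_mod_cast pi_ne_zero) I_ne_zero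
    exact mul_left_cancel₀ hπ (by linear_combination hk)
  have : x = 2 * k := by exact_mod_cast this
  linarith

theorem twist_orthogonality_general
    (N P : ℕ) (hN : 0 < N)
    (T : Module.End ℂ (FockSpace (Fin N)))
    (hTunitary : ∀ ψ φ : FockSpace (Fin N), fdot (T ψ) (T φ) = fdot ψ φ)
    (hTvac : T vac = vac)
    (hTcdag : ∀ (x : Fin N) (σ : Spin),
        cdag (x, σ) ∘ₗ T = T ∘ₗ cdag (shiftP N P hN x, σ))
    (Ne Nup : ℕ) (hNe : Ne = 2 * Nup)
    (Φ : FockSpace (Fin N))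
    (hNupΦ : NhatUp Φ = ((Nup : ℝ) : ℂ) • Φ)
    (hTΦ : T Φ = Φ) :
    T (Utw N Φ) =
        Complex.exp (Real.pi * Complex.I * P * ((Ne : ℝ) / N)) • Utw N Φ ∧
      ((¬ ∃ k : ℤ, (P : ℝ) * ((Ne : ℝ) / N) / 2 = (k : ℝ)) →
        fdot Φ (Utw N Φ) = 0) := by
  obtain ⟨ε, hT⟩ :=
    exists_apply_eq_mul_map (e := shiftModes N P hN) hTvac fun i => hTcdag i.1 i.2
  have hphase : cexp (2 * π * I / N) ^ (P * Nup) = cexp (π * I * P * ((Ne : ℝ) / N)) := by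
    rw [← Complex.exp_nat_mul, hNe]
    congr 1
    push_cast
    field_simp
  have hΨ : T (Utw N Φ) = cexp (π * I * P * ((Ne : ℝ) / N)) • Utw N Φ := by
    rw [← hphase]
    exact apply_Utw_eq_smul_Utw hT (by simpa using hNupΦ) hTΦ
  refine ⟨hΨ, fun hν => fdot_eq_zero_of_eigenvalue_ne_one hTunitary hTΦ hΨ ?_⟩
  convert cexp_pi_mul_ne_one hν using 2
  push_cast
  ring

/-- **Twist-operator orthogonality** (the finite-volume step of the
Yamanaka–Oshikawa–Affleck theorem).  Let `T` be the unitary translation operator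
by the period `P` (implementing `c_{x,σ} ↦ c_{x+P,σ}`), and let `Φ` be a normalized
state with `N̂_e Φ = N_e Φ`, `N̂_↑ Φ = (N_e/2) Φ` and `T Φ = Φ`.  Then the twisted
state `Ψ = U_tw Φ` satisfies `T Ψ = e^{iπPν} Ψ` with `ν = N_e/N`; consequently, if
`Pν/2` is not an integer, `Ψ` is orthogonal to `Φ`. -/
theorem twist_orthogonality
    (N P : ℕ) (hN : 0 < N)
    (t : Fin N → Fin N → ℝ) (U : Fin N → ℝ)
    (hsym : ∀ x y, t x y = t y x)
    (htper : ∀ x y : Fin N, t (shiftP N P hN x) (shiftP N P hN y) = t x y)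
    (hUper : ∀ x : Fin N, U (shiftP N P hN x) = U x)
    (T : Module.End ℂ (FockSpace (Fin N)))
    (hTunitary : ∀ ψ φ : FockSpace (Fin N), fdot (T ψ) (T φ) = fdot ψ φ)
    (hTbij : Function.Bijective T)
    (hTvac : T vac = vac)
    (hTc : ∀ (x : Fin N) (σ : Spin),
        cop (x, σ) ∘ₗ T = T ∘ₗ cop (shiftP N P hN x, σ))
    (hTcdag : ∀ (x : Fin N) (σ : Spin),
        cdag (x, σ) ∘ₗ T = T ∘ₗ cdag (shiftP N P hN x, σ))
    (Ne Nup : ℕ) (hNe : Ne = 2 * Nup)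
    (Φ : FockSpace (Fin N))
    (hnorm : fdot Φ Φ = 1)
    (hNeΦ : Nhat Φ = ((Ne : ℝ) : ℂ) • Φ)
    (hNupΦ : NhatUp Φ = ((Nup : ℝ) : ℂ) • Φ)
    (hTΦ : T Φ = Φ) :
    T (Utw N Φ) =
        Complex.exp (Real.pi * Complex.I * P * ((Ne : ℝ) / N)) • Utw N Φ ∧
      ((¬ ∃ k : ℤ, (P : ℝ) * ((Ne : ℝ) / N) / 2 = (k : ℝ)) →
        fdot Φ (Utw N Φ) = 0) :=
  twist_orthogonality_general N P hN T hTunitary hTvac hTcdag Ne Nup hNe Φ hNupΦ hTΦ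

end Hubbard
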